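/- For every set Γ of L-formulas and every L-formula φ: Γ ⊩^{inm} φ if and only if Γ ⊨ φ; that is, semantic consequence over intuitionistic neighbourhood models coincides with semantic consequence over IFOM-structures. -/

import Mathlib

/-
Common formalisation of the syntax and semantics of the intuitionistic
monotone modal logic IM, its generalised Hilbert calculi, intuitionistic
neighbourhood models, IFOM-structures, and related constructions.
-/

namespace IMPaper

/-- Formulas of the monotone modal language L. -/
inductive Formula : Type
  | prop : ℕ → Formula
  | bot  : Formula
  | and  : Formula → Formula → Formula
  | or   : Formula → Formula → Formula
  | imp  : Formula → Formula → Formula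
  | box  : Formula → Formula
  | dia  : Formula → Formula
deriving DecidableEq

/-- Negation: ¬φ abbreviates φ → ⊥. -/
def Formula.neg (φ : Formula) : Formula := φ.imp .bot

/-- Top: ⊤ abbreviates ⊥ → ⊥. -/
def Formula.top : Formula := Formula.bot.imp .bot

/-- Substitution of formulas for proposition letters. -/
def Formula.subst (σ : ℕ → Formula) : Formula → Formula
  | .prop i   => σ i
  | .bot      => .bot
  | .and φ ψ  => .and (φ.subst σ) (ψ.subst σ)
  | .or φ ψ   => .or (φ.subst σ) (ψ.subst σ)
  | .imp φ ψ  => .imp (φ.subst σ) (ψ.subst σ)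
  | .box φ    => .box (φ.subst σ)
  | .dia φ    => .dia (φ.subst σ)

private def pp0 : Formula := .prop 0
private def pp1 : Formula := .prop 1
private def pp2 : Formula := .prop 2

/-- A standard axiomatisation of intuitionistic propositional logic. -/
def IpcAx : Set Formula :=
  { Formula.imp pp0 (.imp pp1 pp0),
    Formula.imp (.imp pp0 (.imp pp1 pp2)) (.imp (.imp pp0 pp1) (.imp pp0 pp2)),
    Formula.imp (.and pp0 pp1) pp0,
    Formula.imp (.and pp0 pp1) pp1,
    Formula.imp pp0 (.imp pp1 (.and pp0 pp1)),
    Formula.imp pp0 (.or pp0 pp1),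
    Formula.imp pp1 (.or pp0 pp1),
    Formula.imp (.imp pp0 pp2) (.imp (.imp pp1 pp2) (.imp (.or pp0 pp1) pp2)),
    Formula.imp .bot pp0 }

/-- All substitution instances of a set of formulas. -/
def Instances (Ax : Set Formula) : Set Formula :=
  {φ | ∃ ψ ∈ Ax, ∃ σ, φ = ψ.subst σ}

/-- 𝒜x: all substitution instances of Ax together with all substitution
instances of the axioms of intuitionistic propositional logic. -/
def ScrAx (Ax : Set Formula) : Set Formula := Instances Ax ∪ Instances IpcAx

/-- The generalised Hilbert calculus GHC(Ax). -/
inductive GHC (Ax : Set Formula) : Set Formula → Formula → Prop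
  | el {Γ : Set Formula} {φ : Formula} : φ ∈ Γ → GHC Ax Γ φ
  | ax {Γ : Set Formula} {φ : Formula} : φ ∈ ScrAx Ax → GHC Ax Γ φ
  | mp {Γ : Set Formula} {φ ψ : Formula} :
      GHC Ax Γ φ → GHC Ax Γ (φ.imp ψ) → GHC Ax Γ ψ
  | monBox {Γ : Set Formula} {φ ψ : Formula} :
      GHC Ax ∅ (φ.imp ψ) → GHC Ax Γ ((Formula.box φ).imp (Formula.box ψ))
  | monDia {Γ : Set Formula} {φ ψ : Formula} :
      GHC Ax ∅ (φ.imp ψ) → GHC Ax Γ ((Formula.dia φ).imp (Formula.dia ψ))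

/-- The axioms (neg_a) and (I_◇) of the calculus IMCalc. -/
def IMAx : Set Formula :=
  { Formula.imp ((Formula.box pp0).and (Formula.dia pp0.neg)) .bot,
    Formula.imp ((Formula.box Formula.top).imp (Formula.dia pp0)) (Formula.dia pp0) }

/-- Derivability in the calculus IMCalc = GHC({(□p ∧ ◇¬p) → ⊥, (□⊤ → ◇p) → ◇p}). -/
def IMC : Set Formula → Formula → Prop := GHC IMAx

/-- An intuitionistic neighbourhood: a partial function W ⇀ 𝒫(W), encoded as a
domain together with a (total) value function whose values matter on the domain. -/
structure Nbhd (W : Type) where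
  dom : Set W
  val : W → Set W

/-- The data of an intuitionistic neighbourhood model. -/
structure INStruct (W : Type) where
  le : W → W → Prop
  N : Set (Nbhd W)
  V : ℕ → Set W

variable {W W' : Type}

/-- A set is upward closed w.r.t. the order of the structure. -/
def INStruct.Up (M : INStruct W) (s : Set W) : Prop :=
  ∀ ⦃w v : W⦄, M.le w v → w ∈ s → v ∈ s

/-- `M` is an intuitionistic neighbourhood model: the order is a partial order,
the domain of every neighbourhood is upward closed, and the valuation assigns
upward closed sets to proposition letters. -/
def INStruct.IsModel (M : INStruct W) : Prop :=
  IsPartialOrder W M.le ∧ (∀ a ∈ M.N, M.Up a.dom) ∧ ∀ i, M.Up (M.V i)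

/-- Truth of a formula at a world of an intuitionistic neighbourhood model. -/
def INStruct.sat (M : INStruct W) : Formula → W → Prop
  | .prop i, w  => w ∈ M.V i
  | .bot, _     => False
  | .and φ ψ, w => M.sat φ w ∧ M.sat ψ w
  | .or φ ψ, w  => M.sat φ w ∨ M.sat ψ w
  | .imp φ ψ, w => ∀ v, M.le w v → M.sat φ v → M.sat ψ v
  | .box φ, w   => ∃ a ∈ M.N, w ∈ a.dom ∧
      ∀ w', M.le w w' → ∀ v ∈ a.val w', M.sat φ v
  | .dia φ, w   => ∀ w', M.le w w' → ∀ a ∈ M.N, w' ∈ a.dom →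
      ∃ v ∈ a.val w', M.sat φ v

/-- Semantic consequence over the class of all intuitionistic neighbourhood models. -/
def INConseq (Γ : Set Formula) (φ : Formula) : Prop :=
  ∀ (W : Type) (M : INStruct W), M.IsModel →
    ∀ w : W, (∀ ψ ∈ Γ, M.sat ψ w) → M.sat φ w

/-- A coherent intuitionistic neighbourhood: conditions (N1) and (N2). -/
def INStruct.CoherentNbhd (M : INStruct W) (a : Nbhd W) : Prop :=
  (∀ ⦃w w' : W⦄, M.le w w' → w ∈ a.dom → ∀ v ∈ a.val w, ∃ v' ∈ a.val w', M.le v v') ∧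
  (∀ ⦃w : W⦄, w ∈ a.dom → ∀ v ∈ a.val w, ∀ v', M.le v v' →
      ∃ w', M.le w w' ∧ v' ∈ a.val w')

/-- A model is coherent if all its intuitionistic neighbourhoods are coherent. -/
def INStruct.Coherent (M : INStruct W) : Prop := ∀ a ∈ M.N, M.CoherentNbhd a

/-- Semantic consequence over the class of coherent intuitionistic neighbourhood models. -/
def CohConseq (Γ : Set Formula) (φ : Formula) : Prop :=
  ∀ (W : Type) (M : INStruct W), M.IsModel → M.Coherent →
    ∀ w : W, (∀ ψ ∈ Γ, M.sat ψ w) → M.sat φ w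

/-- The relation R: w R v iff v ∈ a(w) for some neighbourhood a of w. -/
def INStruct.R (M : INStruct W) (w v : W) : Prop :=
  ∃ a ∈ M.N, w ∈ a.dom ∧ v ∈ a.val w

/-- R~-Cartesian: w ≤~ v R~ w implies w = v (with ~ the equivalence closures). -/
def INStruct.RCartesian (M : INStruct W) : Prop :=
  ∀ w v, Relation.EqvGen M.le w v → Relation.EqvGen M.R v w → w = v

/-- N-Cartesian: w R~ v and w, v ∈ dom(a) imply a(w) = a(v). -/
def INStruct.NCartesian (M : INStruct W) : Prop :=
  ∀ a ∈ M.N, ∀ w v, Relation.EqvGen M.R w v → w ∈ a.dom → v ∈ a.dom →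
    a.val w = a.val v

/-- Cartesian: both R~-Cartesian and N-Cartesian. -/
def INStruct.Cartesian (M : INStruct W) : Prop := M.RCartesian ∧ M.NCartesian

/-- Isomorphism of intuitionistic neighbourhood structures. -/
def Isomorphic (M : INStruct W) (M' : INStruct W') : Prop :=
  ∃ (α : W → W') (ν : Nbhd W → Nbhd W'),
    Function.Bijective α ∧ Set.BijOn ν M.N M'.N ∧
    (∀ w v, M.le w v ↔ M'.le (α w) (α v)) ∧
    (∀ a ∈ M.N, ∀ w, w ∈ a.dom ↔ α w ∈ (ν a).dom) ∧
    (∀ a ∈ M.N, ∀ u ∈ a.dom, ∀ w, w ∈ a.val u ↔ α w ∈ (ν a).val (α u)) ∧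
    (∀ i w, w ∈ M.V i ↔ α w ∈ M'.V i)

end IMPaper
namespace IMPaper

variable {W S A : Type}

/-- The data of an IFOM-structure (two-sorted intuitionistic first-order structure). -/
structure IFOMStruct (W S A : Type) where
  le : W → W → Prop
  Is : W → Set S
  In : W → Set A
  rN : W → S → A → Prop
  rE : W → A → S → Prop
  IP : ℕ → W → Set S

/-- `F` is an IFOM-structure: the order is a partial order, the predicates are
typed by the sort interpretations, and all interpretations increase along ≤. -/
def IFOMStruct.IsIFOM (F : IFOMStruct W S A) : Prop :=
  IsPartialOrder W F.le ∧
  (∀ ⦃w w'⦄, F.le w w' → F.Is w ⊆ F.Is w') ∧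
  (∀ ⦃w w'⦄, F.le w w' → F.In w ⊆ F.In w') ∧
  (∀ ⦃w w'⦄, F.le w w' → ∀ x a, F.rN w x a → F.rN w' x a) ∧
  (∀ ⦃w w'⦄, F.le w w' → ∀ a x, F.rE w a x → F.rE w' a x) ∧
  (∀ i ⦃w w'⦄, F.le w w' → F.IP i w ⊆ F.IP i w') ∧
  (∀ w x a, F.rN w x a → x ∈ F.Is w ∧ a ∈ F.In w) ∧
  (∀ w a x, F.rE w a x → a ∈ F.In w ∧ x ∈ F.Is w) ∧
  (∀ i w, F.IP i w ⊆ F.Is w)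

/-- Interpretation of L-formulas at a pair (w, x) of an IFOM-structure. -/
def IFOMStruct.sat (F : IFOMStruct W S A) : Formula → W → S → Prop
  | .prop i, w, x  => x ∈ F.IP i w
  | .bot, _, _     => False
  | .and φ ψ, w, x => F.sat φ w x ∧ F.sat ψ w x
  | .or φ ψ, w, x  => F.sat φ w x ∨ F.sat ψ w x
  | .imp φ ψ, w, x => ∀ w', F.le w w' → F.sat φ w' x → F.sat ψ w' x
  | .box φ, w, x   => ∃ a, a ∈ F.In w ∧ F.rN w x a ∧
      ∀ w', F.le w w' → ∀ x', x' ∈ F.Is w' → F.rE w' a x' → F.sat φ w' x'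
  | .dia φ, w, x   => ∀ w', F.le w w' → ∀ a', a' ∈ F.In w' → F.rN w' x a' →
      ∃ y', y' ∈ F.Is w' ∧ F.rE w' a' y' ∧ F.sat φ w' y'

/-- Semantic consequence over the class of all IFOM-structures. -/
def IFOMConseq (Γ : Set Formula) (φ : Formula) : Prop :=
  ∀ (W S A : Type) (F : IFOMStruct W S A), F.IsIFOM →
    ∀ (w : W) (x : S), x ∈ F.Is w → (∀ ψ ∈ Γ, F.sat ψ w x) → F.sat φ w x

/-- The carrier W• of the induced intuitionistic neighbourhood model 𝔐•. -/
def IFOMStruct.BullW (F : IFOMStruct W S A) : Type := {p : W × S // p.2 ∈ F.Is p.1}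

/-- The intuitionistic neighbourhood a• induced by an element a of sort n. -/
def IFOMStruct.bullNbhd (F : IFOMStruct W S A) (a : A) : Nbhd F.BullW where
  dom := {p | a ∈ F.In p.1.1 ∧ F.rN p.1.1 p.1.2 a}
  val := fun p => {q | q.1.1 = p.1.1 ∧ F.rE p.1.1 a q.1.2}

/-- The intuitionistic neighbourhood model 𝔐• induced by an IFOM-structure 𝔐. -/
def IFOMStruct.bull (F : IFOMStruct W S A) : INStruct F.BullW where
  le := fun p q => F.le p.1.1 q.1.1 ∧ p.1.2 = q.1.2
  N := {b | ∃ w, ∃ a ∈ F.In w, b = F.bullNbhd a}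
  V := fun i => {p | p.1.2 ∈ F.IP i p.1.1}

end IMPaper
namespace IMPaper

/-!
An IFOM-structure `F` induces the neighbourhood model `F.bull` on its pairs `(w, x)`, with the
same truths; so an IFOM-countermodel yields a neighbourhood countermodel.

Conversely a neighbourhood model `M` is unravelled into an IFOM-structure. Objects are points of
`M` tagged with a birth time; a world is a stage, i.e. a clock and a current position for every
object, objects born after the clock still sitting at their birthplace. Objects move up in `M`
along the order of stages, and `(s, x)` satisfies what the position of `x` at `s` satisfies. A
neighbourhood `a` becomes labels remembering an owner `x`, a lower bound `base` for its position
and a birth bound `born`; their successors are the objects born after `born` at points of `a u`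
with `base ≤ u ≤` the position of `x`. Fresh objects realise any point of `M` at any stage,
and a label created at the current clock pins its successors to `a` of the current position
of `x`.
-/

variable {W S A : Type}

section Heredity

variable {M : INStruct W}

lemma INStruct.IsModel.le_refl (hM : M.IsModel) (w : W) : M.le w w := hM.1.refl w

lemma INStruct.IsModel.le_trans (hM : M.IsModel) {u v w : W} (huv : M.le u v)
    (hvw : M.le v w) : M.le u w :=
  hM.1.trans u v w huv hvw

lemma INStruct.IsModel.le_antisymm (hM : M.IsModel) {u v : W} (huv : M.le u v)
    (hvu : M.le v u) : u = v :=
  hM.1.antisymm u v huv hvu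

lemma INStruct.sat_mono (hM : M.IsModel) (φ : Formula) {w v : W} (hwv : M.le w v)
    (hw : M.sat φ w) : M.sat φ v := by
  induction φ generalizing w v with
  | prop i => exact hM.2.2 i hwv hw
  | bot => exact hw
  | and φ ψ ihφ ihψ => exact ⟨ihφ hwv hw.1, ihψ hwv hw.2⟩
  | or φ ψ ihφ ihψ => exact hw.imp (ihφ hwv) (ihψ hwv)
  | imp φ ψ _ _ => exact fun u hvu => hw u (hM.le_trans hwv hvu)
  | box φ _ =>
      obtain ⟨a, haN, hdom, H⟩ := hw
      exact ⟨a, haN, hM.2.1 a haN hwv hdom, fun w' hvw' => H w' (hM.le_trans hwv hvw')⟩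
  | dia φ _ => exact fun w' hvw' => hw w' (hM.le_trans hwv hvw')

end Heredity

section Bull

variable {F : IFOMStruct W S A}

lemma IFOMStruct.bull_isModel (hF : F.IsIFOM) : F.bull.IsModel := by
  obtain ⟨hPO, -, hIn, hrN, -, hIP, -⟩ := hF
  refine ⟨?_, ?_, fun i p q hpq hp => (hpq.2 ▸ hIP i hpq.1 hp :)⟩
  · exact
      { refl := fun p => ⟨hPO.refl _, rfl⟩
        trans := fun p q r hpq hqr => ⟨hPO.trans _ _ _ hpq.1 hqr.1, hpq.2.trans hqr.2⟩
        antisymm := fun p q hpq hqp =>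
          Subtype.ext (Prod.ext (hPO.antisymm _ _ hpq.1 hqp.1) hpq.2) }
  · rintro b ⟨-, a, -, rfl⟩ p q hpq ⟨ha, hpa⟩
    exact ⟨hIn hpq.1 ha, hpq.2 ▸ hrN hpq.1 _ _ hpa⟩

variable {φ ψ : Formula}

lemma IFOMStruct.bull_sat_imp_iff (hF : F.IsIFOM)
    (ihφ : ∀ p : F.BullW, F.bull.sat φ p ↔ F.sat φ p.1.1 p.1.2)
    (ihψ : ∀ p : F.BullW, F.bull.sat ψ p ↔ F.sat ψ p.1.1 p.1.2) (p : F.BullW) :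
    F.bull.sat (φ.imp ψ) p ↔ F.sat (φ.imp ψ) p.1.1 p.1.2 := by
  constructor
  · intro h w' hw' hφ
    exact (ihψ _).1 (h ⟨(w', p.1.2), hF.2.1 hw' p.2⟩ ⟨hw', rfl⟩ ((ihφ _).2 hφ))
  · rintro h ⟨⟨w', x⟩, hx⟩ ⟨hw', rfl⟩ hφ
    exact (ihψ _).2 (h w' hw' ((ihφ _).1 hφ))

lemma IFOMStruct.bull_sat_box_iff (hF : F.IsIFOM)
    (ih : ∀ p : F.BullW, F.bull.sat φ p ↔ F.sat φ p.1.1 p.1.2) (p : F.BullW) :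
    F.bull.sat φ.box p ↔ F.sat φ.box p.1.1 p.1.2 := by
  constructor
  · rintro ⟨-, ⟨-, a, -, rfl⟩, ⟨ha, hpa⟩, H⟩
    refine ⟨a, ha, hpa, fun w' hw' x' hx' hE => (ih ⟨(w', x'), hx'⟩).1 ?_⟩
    exact H ⟨(w', p.1.2), hF.2.1 hw' p.2⟩ ⟨hw', rfl⟩ ⟨(w', x'), hx'⟩ ⟨rfl, hE⟩
  · rintro ⟨a, ha, hpa, H⟩
    refine ⟨F.bullNbhd a, ⟨p.1.1, a, ha, rfl⟩, ⟨ha, hpa⟩, ?_⟩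
    rintro p' hp' ⟨⟨w', x'⟩, hx'⟩ ⟨rfl, hE⟩
    exact (ih _).2 (H _ hp'.1 x' hx' hE)

lemma IFOMStruct.bull_sat_dia_iff (hF : F.IsIFOM)
    (ih : ∀ p : F.BullW, F.bull.sat φ p ↔ F.sat φ p.1.1 p.1.2) (p : F.BullW) :
    F.bull.sat φ.dia p ↔ F.sat φ.dia p.1.1 p.1.2 := by
  constructor
  · intro h w' hw' a ha hpa
    obtain ⟨⟨⟨w'', y⟩, hy⟩, ⟨rfl, hE⟩, hφ⟩ :=
      h ⟨(w', p.1.2), hF.2.1 hw' p.2⟩ ⟨hw', rfl⟩ (F.bullNbhd a) ⟨w', a, ha, rfl⟩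
        ⟨ha, hpa⟩
    exact ⟨y, hy, hE, (ih _).1 hφ⟩
  · rintro h p' hp' - ⟨-, a, -, rfl⟩ ⟨ha, hpa⟩
    obtain ⟨y, hy, hE, hφ⟩ := h p'.1.1 hp'.1 a ha (hp'.2 ▸ hpa)
    exact ⟨⟨(p'.1.1, y), hy⟩, ⟨rfl, hE⟩, (ih _).2 hφ⟩

lemma IFOMStruct.bull_sat_iff (hF : F.IsIFOM) (φ : Formula) (p : F.BullW) :
    F.bull.sat φ p ↔ F.sat φ p.1.1 p.1.2 := by
  induction φ generalizing p with
  | prop i => exact Iff.rfl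
  | bot => exact Iff.rfl
  | and φ ψ ihφ ihψ => exact and_congr (ihφ p) (ihψ p)
  | or φ ψ ihφ ihψ => exact or_congr (ihφ p) (ihψ p)
  | imp φ ψ ihφ ihψ => exact IFOMStruct.bull_sat_imp_iff hF ihφ ihψ p
  | box φ ih => exact IFOMStruct.bull_sat_box_iff hF ih p
  | dia φ ih => exact IFOMStruct.bull_sat_dia_iff hF ih p

end Bull

section Unravel

variable {M : INStruct W}

variable (M) in
@[ext]
structure INStruct.Stage where
  clock : ℕ
  pos : W × ℕ → W
  le_pos : ∀ x, M.le x.1 (pos x)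
  pos_of_clock_le : ∀ x, clock ≤ x.2 → pos x = x.1

namespace INStruct.Stage

def le (s t : M.Stage) : Prop := s.clock ≤ t.clock ∧ ∀ x, M.le (s.pos x) (t.pos x)

def init (hM : M.IsModel) : M.Stage where
  clock := 0
  pos := Prod.fst
  le_pos x := hM.le_refl x.1
  pos_of_clock_le _ _ := rfl

open scoped Classical in
noncomputable def move (hM : M.IsModel) (s : M.Stage) (x : W × ℕ) (u : W)
    (hu : M.le (s.pos x) u) : M.Stage where
  clock := max s.clock (x.2 + 1)
  pos := Function.update s.pos x u
  le_pos y := by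
    rcases eq_or_ne y x with rfl | hyx
    · simpa using hM.le_trans (s.le_pos y) hu
    · simpa [hyx] using s.le_pos y
  pos_of_clock_le y hy := by
    have hyx : y ≠ x := by rintro rfl; omega
    simpa [hyx] using s.pos_of_clock_le y (le_of_max_le_left hy)

variable (hM : M.IsModel) (s : M.Stage) {x : W × ℕ} {u : W} (hu : M.le (s.pos x) u)

lemma move_pos : (s.move hM x u hu).pos x = u := by simp [move]

lemma le_move : s.le (s.move hM x u hu) := by
  refine ⟨le_max_left _ _, fun y => ?_⟩
  rcases eq_or_ne y x with rfl | hyx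
  · simpa [move] using hu
  · simpa [move, hyx] using hM.le_refl (s.pos y)

lemma pos_fresh (v : W) (k : ℕ) : s.pos (v, max s.clock k) = v :=
  s.pos_of_clock_le _ (le_max_left _ _)

end INStruct.Stage

structure NbhdLabel (W : Type) where
  nbhd : Nbhd W
  owner : W × ℕ
  born : ℕ
  base : W

variable (M) in
def INStruct.unravel : IFOMStruct M.Stage (W × ℕ) (NbhdLabel W) where
  le := INStruct.Stage.le
  Is _ := Set.univ
  In _ := Set.univ
  rN s x b := b.owner = x ∧ b.nbhd ∈ M.N ∧ s.pos x ∈ b.nbhd.dom ∧ M.le b.base (s.pos x)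
  rE s b y :=
    b.born ≤ y.2 ∧ ∃ u, M.le b.base u ∧ M.le u (s.pos b.owner) ∧ y.1 ∈ b.nbhd.val u
  IP i s := {x | s.pos x ∈ M.V i}

lemma INStruct.unravel_isIFOM (hM : M.IsModel) : M.unravel.IsIFOM := by
  refine ⟨?_, fun _ _ _ => subset_rfl, fun _ _ _ => subset_rfl, ?_, ?_,
    fun i s t hst x hx => hM.2.2 i (hst.2 x) hx, fun _ _ _ _ => ⟨trivial, trivial⟩,
    fun _ _ _ _ => ⟨trivial, trivial⟩, fun _ _ => Set.subset_univ _⟩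
  · exact
      { refl := fun s => ⟨le_rfl, fun x => hM.le_refl _⟩
        trans := fun s t r hst htr =>
          ⟨hst.1.trans htr.1, fun x => hM.le_trans (hst.2 x) (htr.2 x)⟩
        antisymm := fun s t hst hts => INStruct.Stage.ext (le_antisymm hst.1 hts.1)
          (funext fun x => hM.le_antisymm (hst.2 x) (hts.2 x)) }
  · rintro s t hst x b ⟨rfl, hN, hdom, hbase⟩
    exact ⟨rfl, hN, hM.2.1 _ hN (hst.2 _) hdom, hM.le_trans hbase (hst.2 _)⟩
  · rintro s t hst b y ⟨hborn, u, hbase, hu, hy⟩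
    exact ⟨hborn, u, hbase, hM.le_trans hu (hst.2 _), hy⟩

variable {φ ψ : Formula}

lemma INStruct.unravel_sat_imp_iff (hM : M.IsModel)
    (ihφ : ∀ s x, M.unravel.sat φ s x ↔ M.sat φ (s.pos x))
    (ihψ : ∀ s x, M.unravel.sat ψ s x ↔ M.sat ψ (s.pos x)) (s : M.Stage) (x : W × ℕ) :
    M.unravel.sat (φ.imp ψ) s x ↔ M.sat (φ.imp ψ) (s.pos x) := by
  constructor
  · intro h v hv hφ
    have hpos := s.move_pos hM hv
    have hψ := (ihψ _ x).1 (h _ (s.le_move hM hv) ((ihφ _ x).2 (by rwa [hpos])))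
    rwa [hpos] at hψ
  · exact fun h t hst hφ => (ihψ t x).2 (h _ (hst.2 x) ((ihφ t x).1 hφ))

lemma INStruct.unravel_sat_box_iff (hM : M.IsModel)
    (ih : ∀ s x, M.unravel.sat φ s x ↔ M.sat φ (s.pos x)) (s : M.Stage) (x : W × ℕ) :
    M.unravel.sat φ.box s x ↔ M.sat φ.box (s.pos x) := by
  constructor
  · rintro ⟨b, -, ⟨rfl, hN, hdom, hbase⟩, H⟩
    refine ⟨b.nbhd, hN, hdom, fun w' hw' v hv => ?_⟩
    let t := s.move hM b.owner w' hw'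
    have hpos : t.pos b.owner = w' := s.move_pos hM hw'
    have hE : M.unravel.rE t b (v, max t.clock b.born) :=
      ⟨le_max_right _ _, w', hM.le_trans hbase hw', by rw [hpos]; exact hM.le_refl w', hv⟩
    have hφ := (ih t _).1 (H t (s.le_move hM hw') _ trivial hE)
    rwa [t.pos_fresh] at hφ
  · rintro ⟨a, hN, hdom, H⟩
    refine ⟨⟨a, x, 0, s.pos x⟩, trivial, ⟨rfl, hN, hdom, hM.le_refl _⟩, ?_⟩
    rintro t - y - ⟨-, u, hbase, -, hy⟩
    exact (ih t y).2 (INStruct.sat_mono hM φ (t.le_pos y) (H u hbase y.1 hy))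

lemma INStruct.unravel_sat_dia_iff (hM : M.IsModel)
    (ih : ∀ s x, M.unravel.sat φ s x ↔ M.sat φ (s.pos x)) (s : M.Stage) (x : W × ℕ) :
    M.unravel.sat φ.dia s x ↔ M.sat φ.dia (s.pos x) := by
  constructor
  · intro h w' hw' a hN hdom
    have hpos := s.move_pos hM hw'
    obtain ⟨y, -, ⟨hborn, u, hbase, hu, hy⟩, hφ⟩ :=
      h _ (s.le_move hM hw') ⟨a, x, (s.move hM x w' hw').clock, w'⟩ trivial
        ⟨rfl, hN, by rwa [hpos], by rw [hpos]; exact hM.le_refl w'⟩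
    -- `born` is the current clock, so `y` has not moved yet and `u` is squeezed to `w'`
    obtain rfl : u = w' := hM.le_antisymm (by rwa [hpos] at hu) hbase
    have hφ := (ih _ _).1 hφ
    rw [Stage.pos_of_clock_le _ y hborn] at hφ
    exact ⟨y.1, hy, hφ⟩
  · rintro h t hst b - ⟨rfl, hN, hdom, hbase⟩
    obtain ⟨v, hv, hφ⟩ := h _ (hst.2 _) b.nbhd hN hdom
    refine ⟨(v, max t.clock b.born), trivial,
      ⟨le_max_right _ _, _, hbase, hM.le_refl _, hv⟩, ?_⟩
    exact (ih _ _).2 ((t.pos_fresh v b.born).symm ▸ hφ)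

lemma INStruct.unravel_sat_iff (hM : M.IsModel) (φ : Formula) (s : M.Stage) (x : W × ℕ) :
    M.unravel.sat φ s x ↔ M.sat φ (s.pos x) := by
  induction φ generalizing s x with
  | prop i => exact Iff.rfl
  | bot => exact Iff.rfl
  | and φ ψ ihφ ihψ => exact and_congr (ihφ s x) (ihψ s x)
  | or φ ψ ihφ ihψ => exact or_congr (ihφ s x) (ihψ s x)
  | imp φ ψ ihφ ihψ => exact INStruct.unravel_sat_imp_iff hM ihφ ihψ s x
  | box φ ih => exact INStruct.unravel_sat_box_iff hM ih s x
  | dia φ ih => exact INStruct.unravel_sat_dia_iff hM ih s x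

end Unravel

/-- semantic consequence over intuitionistic neighbourhood models
coincides with semantic consequence over IFOM-structures. -/
theorem inm_iff_ifom (Γ : Set Formula) (φ : Formula) :
    INConseq Γ φ ↔ IFOMConseq Γ φ := by
  constructor
  · intro h W S A F hF w x hx hΓ
    let p : F.BullW := ⟨(w, x), hx⟩
    refine (F.bull_sat_iff hF φ p).1 (h _ F.bull (F.bull_isModel hF) p fun ψ hψ => ?_)
    exact (F.bull_sat_iff hF ψ p).2 (hΓ ψ hψ)
  · intro h W M hM w hΓ
    let s := INStruct.Stage.init hM
    refine (M.unravel_sat_iff hM φ s (w, 0)).1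
      (h _ _ _ M.unravel (M.unravel_isIFOM hM) s (w, 0) trivial fun ψ hψ => ?_)
    exact (M.unravel_sat_iff hM ψ s (w, 0)).2 (hΓ ψ hψ)

end IMPaper
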